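/- arXiv:2106.08100 — 6 statements merged into one kernel-verified Lean document; each statement's English description precedes it below -/
import Mathlib

section
/- Let f : ℝ^r → ℝ be defined by f(x) = exp(∑_{j=1}^r x_j) / (1 + exp(∑_{j=1}^r x_j)). Suppose x, y ∈ ℝ^r satisfy |x_i − y_i| ≤ δ/r for all i, for some constant δ ≥ 0, and let p be the number of coordinates where x and y differ. Then e^{−δp/r} ≤ f(x)/f(y) ≤ e^{δp/r} and e^{−δp/r} ≤ (1−f(x))/(1−f(y)) ≤ e^{δp/r}. -/
/-!
`log ∘ logistic` is 1-Lipschitz, and `1 - logistic s = logistic (-s)`, so both ratios lie in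
`[exp (-Δ), exp Δ]` once `|∑ x - ∑ y| ≤ Δ`; only the `p` differing coordinates contribute to
that difference, each at most `δ / r`.
-/

noncomputable def logistic (s : ℝ) : ℝ := Real.exp s / (1 + Real.exp s)

open Real Finset

lemma logistic_eq_inv (s : ℝ) : logistic s = (1 + exp (-s))⁻¹ := by
  rw [logistic, exp_neg]
  field_simp
  ring

lemma one_sub_logistic (s : ℝ) : 1 - logistic s = logistic (-s) := by
  rw [logistic_eq_inv, logistic]
  field_simp
  ring

lemma one_add_exp_le_exp_mul {a b Δ : ℝ} (hΔ : 0 ≤ Δ) (hab : a ≤ b + Δ) :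
    1 + exp a ≤ exp Δ * (1 + exp b) := by
  calc 1 + exp a ≤ exp Δ + exp (Δ + b) := by
        gcongr
        · exact one_le_exp hΔ
        · linarith
    _ = exp Δ * (1 + exp b) := by rw [exp_add]; ring

lemma logistic_div_le_exp {s t Δ : ℝ} (hΔ : 0 ≤ Δ) (hst : s - t ≤ Δ) :
    logistic s / logistic t ≤ exp Δ := by
  rw [logistic_eq_inv, logistic_eq_inv, inv_div_inv, div_le_iff₀ (by positivity)]
  exact one_add_exp_le_exp_mul hΔ (by linarith)

lemma logistic_div_mem_Icc {s t Δ : ℝ} (hst : |s - t| ≤ Δ) :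
    logistic s / logistic t ∈ Set.Icc (exp (-Δ)) (exp Δ) := by
  have hΔ : 0 ≤ Δ := (abs_nonneg _).trans hst
  have hts : logistic t / logistic s ≤ exp Δ :=
    logistic_div_le_exp hΔ (by linarith [neg_abs_le (s - t)])
  refine ⟨?_, logistic_div_le_exp hΔ (le_of_abs_le hst)⟩
  rw [exp_neg, ← inv_div]
  exact inv_anti₀ (by rw [logistic_eq_inv, logistic_eq_inv]; positivity) hts

lemma abs_sum_sub_sum_le_card_ne_mul {ι : Type*} [Fintype ι] {x y : ι → ℝ} {ε : ℝ}
    (h : ∀ i, |x i - y i| ≤ ε) :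
    |∑ i, x i - ∑ i, y i| ≤ Nat.card {i // x i ≠ y i} * ε := by
  classical
  rw [Nat.card_eq_fintype_card, Fintype.card_subtype, ← sum_sub_distrib]
  simp_rw [← sub_ne_zero (a := x _), ← sum_filter_ne_zero (s := univ)]
  calc |∑ i with x i - y i ≠ 0, (x i - y i)|
      ≤ ∑ i with x i - y i ≠ 0, |x i - y i| := abs_sum_le_sum_abs _ _
    _ ≤ #{i | x i - y i ≠ 0} * ε := by
        rw [← nsmul_eq_mul]
        exact sum_le_card_nsmul _ _ _ fun i _ => h i

theorem stmt0_general (r : ℕ) (δ : ℝ)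
    (x y : Fin r → ℝ) (h : ∀ i, |x i - y i| ≤ δ / r)
    (p : ℕ) (hp : p = Nat.card {i : Fin r // x i ≠ y i}) :
    Real.exp (-(δ * p) / r) ≤ logistic (∑ j, x j) / logistic (∑ j, y j) ∧
    logistic (∑ j, x j) / logistic (∑ j, y j) ≤ Real.exp ((δ * p) / r) ∧
    Real.exp (-(δ * p) / r) ≤ (1 - logistic (∑ j, x j)) / (1 - logistic (∑ j, y j)) ∧
    (1 - logistic (∑ j, x j)) / (1 - logistic (∑ j, y j)) ≤ Real.exp ((δ * p) / r) := by
  have hsum : |∑ j, x j - ∑ j, y j| ≤ δ * p / r := by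
    have := abs_sum_sub_sum_le_card_ne_mul h
    rwa [← hp, mul_div_assoc', mul_comm] at this
  have hneg : |-∑ j, x j - -∑ j, y j| ≤ δ * p / r := by
    rwa [neg_sub_neg, abs_sub_comm]
  rw [neg_div, one_sub_logistic, one_sub_logistic]
  exact ⟨(logistic_div_mem_Icc hsum).1, (logistic_div_mem_Icc hsum).2,
    (logistic_div_mem_Icc hneg).1, (logistic_div_mem_Icc hneg).2⟩

theorem stmt0 (r : ℕ) (hr : 0 < r) (δ : ℝ) (hδ : 0 ≤ δ)
    (x y : Fin r → ℝ) (h : ∀ i, |x i - y i| ≤ δ / r)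
    (p : ℕ) (hp : p = Nat.card {i : Fin r // x i ≠ y i}) :
    Real.exp (-(δ * p) / r) ≤ logistic (∑ j, x j) / logistic (∑ j, y j) ∧
    logistic (∑ j, x j) / logistic (∑ j, y j) ≤ Real.exp ((δ * p) / r) ∧
    Real.exp (-(δ * p) / r) ≤ (1 - logistic (∑ j, x j)) / (1 - logistic (∑ j, y j)) ∧
    (1 - logistic (∑ j, x j)) / (1 - logistic (∑ j, y j)) ≤ Real.exp ((δ * p) / r) :=
  stmt0_general r δ x y h p hp
end

section
/- Let n ≥ r ≥ 1 and β ∈ ℝ^n with max_{j,k} |β_j − β_k| ≤ δ/r for a constant δ ≥ 0. For each r-subset W of [n] define λ_W(β) = exp(∑_{j∈W} β_j)/(1 + exp(∑_{j∈W} β_j)). Then for any two r-subsets W, W′: e^{−δ(1−|W∩W′|/r)} ≤ λ_W(β)/λ_{W′}(β) ≤ e^{δ(1−|W∩W′|/r)}, and the same two-sided bound holds for (1−λ_W(β))/(1−λ_{W′}(β)). -/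
noncomputable def lamW {n : ℕ} (β : Fin n → ℝ) (W : Finset (Fin n)) : ℝ :=
  Real.exp (∑ j ∈ W, β j) / (1 + Real.exp (∑ j ∈ W, β j))

/-!
`lamW β W` is the logistic sigmoid `σ` of `s_W = ∑_{j ∈ W} β j`, and `1 - σ x = σ (-x)`.
Both ratios are therefore controlled by the elementary bound `σ x ≤ e^c σ y` for `x ≤ y + c`,
`c ≥ 0`, once one knows `|s_W - s_W'| ≤ δ (1 - |W ∩ W'| / r)`. For the latter, the common part
`W ∩ W'` cancels, and the two remaining blocks `W \ W'`, `W' \ W` both have `r - |W ∩ W'|`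
elements, each pairwise difference being at most `δ / r`.
-/

open Finset Real

namespace Finset

variable {ι : Type*} (A B : Finset ι) {β : ι → ℝ} {d : ℝ}

/-- Summing the bound over all pairs `(a, b) ∈ A × B` avoids choosing a matching. -/
lemma sum_sub_sum_le_card_mul_of_card_eq (hAB : #A = #B)
    (h : ∀ a ∈ A, ∀ b ∈ B, β a - β b ≤ d) :
    ∑ a ∈ A, β a - ∑ b ∈ B, β b ≤ #A * d := by
  rcases A.eq_empty_or_nonempty with rfl | hA
  · rw [card_empty, eq_comm, card_eq_zero] at hAB
    simp [hAB]
  have hpairs : (#A : ℝ) * (∑ a ∈ A, β a - ∑ b ∈ B, β b) = ∑ a ∈ A, ∑ b ∈ B, (β a - β b) := by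
    simp only [sum_sub_distrib, sum_const, nsmul_eq_mul, ← mul_sum, hAB]
    ring
  have hbound : ∑ a ∈ A, ∑ b ∈ B, (β a - β b) ≤ #A * (#A * d) := by
    calc ∑ a ∈ A, ∑ b ∈ B, (β a - β b) ≤ ∑ _a ∈ A, ∑ _b ∈ B, d :=
          sum_le_sum fun a ha => sum_le_sum fun b hb => h a ha b hb
      _ = #A * (#A * d) := by simp [hAB]
  exact le_of_mul_le_mul_left (hpairs ▸ hbound) (by exact_mod_cast hA.card_pos)

lemma abs_sum_sub_sum_le_of_card_eq [DecidableEq ι] (hAB : #A = #B)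
    (h : ∀ j k, |β j - β k| ≤ d) :
    |∑ j ∈ A, β j - ∑ j ∈ B, β j| ≤ (#A - #(A ∩ B)) * d := by
  have hcard : (#(A \ B) : ℝ) = #A - #(A ∩ B) := by
    rw [← card_inter_add_card_sdiff A B]
    push_cast
    ring
  have hdiff (s t : Finset ι) (hst : #s = #t) :
      ∑ j ∈ s, β j - ∑ j ∈ t, β j ≤ #(s \ t) * d := by
    rw [← sum_sdiff_sub_sum_sdiff]
    exact sum_sub_sum_le_card_mul_of_card_eq _ _ (card_sdiff_comm hst)
      fun a _ b _ => (le_abs_self _).trans (h a b)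
  rw [abs_le, ← hcard]
  constructor
  · have := hdiff B A hAB.symm
    rw [card_sdiff_comm hAB.symm] at this
    linarith
  · exact hdiff A B hAB

end Finset

namespace Real

lemma sigmoid_le_exp_mul_sigmoid {x y c : ℝ} (hc : 0 ≤ c) (h : x ≤ y + c) :
    sigmoid x ≤ exp c * sigmoid y := by
  have hmono : sigmoid x ≤ sigmoid (y + c) := sigmoid_le h
  have hshift : sigmoid (y + c) ≤ exp c * sigmoid y := by
    have hc' : exp (-c) ≤ 1 := exp_le_one_iff.mpr (neg_nonpos.mpr hc)
    rw [sigmoid_def, sigmoid_def, neg_add, exp_add, inv_le_comm₀ (by positivity) (by positivity),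
      mul_inv, inv_inv, ← exp_neg]
    nlinarith [exp_pos (-y)]
  exact hmono.trans hshift

lemma sigmoid_div_sigmoid_le_exp {x y c : ℝ} (h : |x - y| ≤ c) :
    sigmoid x / sigmoid y ≤ exp c := by
  rw [div_le_iff₀ (sigmoid_pos y)]
  exact sigmoid_le_exp_mul_sigmoid ((abs_nonneg _).trans h) (by linarith [le_abs_self (x - y)])

lemma exp_neg_le_sigmoid_div_sigmoid {x y c : ℝ} (h : |x - y| ≤ c) :
    exp (-c) ≤ sigmoid x / sigmoid y := by
  rw [exp_neg, ← inv_div]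
  exact inv_anti₀ (div_pos (sigmoid_pos y) (sigmoid_pos x))
    (sigmoid_div_sigmoid_le_exp (abs_sub_comm x y ▸ h))

end Real

lemma lamW_eq_sigmoid {n : ℕ} (β : Fin n → ℝ) (W : Finset (Fin n)) :
    lamW β W = sigmoid (∑ j ∈ W, β j) := by
  rw [lamW, sigmoid_def, exp_neg]
  field_simp
  ring

lemma one_sub_lamW_eq_sigmoid {n : ℕ} (β : Fin n → ℝ) (W : Finset (Fin n)) :
    1 - lamW β W = sigmoid (-∑ j ∈ W, β j) := by
  rw [lamW_eq_sigmoid, sigmoid_neg]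

theorem stmt4_general (n r : ℕ) (hr : 1 ≤ r) (δ : ℝ)
    (β : Fin n → ℝ) (hβ : ∀ j k, |β j - β k| ≤ δ / r)
    (W W' : Finset (Fin n)) (hW : W.card = r) (hW' : W'.card = r) :
    Real.exp (-(δ * (1 - (W ∩ W').card / (r : ℝ)))) ≤ lamW β W / lamW β W' ∧
    lamW β W / lamW β W' ≤ Real.exp (δ * (1 - (W ∩ W').card / (r : ℝ))) ∧
    Real.exp (-(δ * (1 - (W ∩ W').card / (r : ℝ)))) ≤ (1 - lamW β W) / (1 - lamW β W') ∧
    (1 - lamW β W) / (1 - lamW β W') ≤ Real.exp (δ * (1 - (W ∩ W').card / (r : ℝ))) := by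
  have hsum := abs_sum_sub_sum_le_of_card_eq W W' (hW.trans hW'.symm) hβ
  rw [hW, show ((r : ℝ) - #(W ∩ W')) * (δ / r) = δ * (1 - #(W ∩ W') / (r : ℝ)) by
    field_simp [show (r : ℝ) ≠ 0 by positivity]] at hsum
  have hsum_neg : |-∑ j ∈ W, β j - -∑ j ∈ W', β j| ≤ δ * (1 - #(W ∩ W') / (r : ℝ)) := by
    rwa [neg_sub_neg, abs_sub_comm]
  rw [one_sub_lamW_eq_sigmoid, one_sub_lamW_eq_sigmoid, lamW_eq_sigmoid, lamW_eq_sigmoid]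
  exact ⟨exp_neg_le_sigmoid_div_sigmoid hsum, sigmoid_div_sigmoid_le_exp hsum,
    exp_neg_le_sigmoid_div_sigmoid hsum_neg, sigmoid_div_sigmoid_le_exp hsum_neg⟩

theorem stmt4 (n r : ℕ) (hr : 1 ≤ r) (hrn : r ≤ n) (δ : ℝ) (hδ : 0 ≤ δ)
    (β : Fin n → ℝ) (hβ : ∀ j k, |β j - β k| ≤ δ / r)
    (W W' : Finset (Fin n)) (hW : W.card = r) (hW' : W'.card = r) :
    Real.exp (-(δ * (1 - (W ∩ W').card / (r : ℝ)))) ≤ lamW β W / lamW β W' ∧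
    lamW β W / lamW β W' ≤ Real.exp (δ * (1 - (W ∩ W').card / (r : ℝ))) ∧
    Real.exp (-(δ * (1 - (W ∩ W').card / (r : ℝ)))) ≤ (1 - lamW β W) / (1 - lamW β W') ∧
    (1 - lamW β W) / (1 - lamW β W') ≤ Real.exp (δ * (1 - (W ∩ W').card / (r : ℝ))) :=
  stmt4_general n r hr δ β hβ W W' hW hW'
end

section
/- Let β ∈ ℝ^n with max_{j,k} |β_j − β_k| ≤ δ/r, and set λ(β) = binom(n,r)^{−1} ∑_{W ∈ S_r(n)} λ_W(β). Then for every r-subset W, e^{−δ} ≤ λ_W(β)/λ(β) ≤ e^{δ}. Moreover, writing Λ(β) = binom(n,r)^{−1} ∑_{W ∈ S_r(n)} λ_W(β)(1−λ_W(β)), we have e^{−2δ} ≤ λ_W(β)(1−λ_W(β))/Λ(β) ≤ e^{2δ} for every r-subset W. -/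
noncomputable def lamAvg (n r : ℕ) (β : Fin n → ℝ) : ℝ :=
  (n.choose r : ℝ)⁻¹ * ∑ W ∈ Finset.powersetCard r (Finset.univ : Finset (Fin n)), lamW β W

noncomputable def LamAvg (n r : ℕ) (β : Fin n → ℝ) : ℝ :=
  (n.choose r : ℝ)⁻¹ *
    ∑ W ∈ Finset.powersetCard r (Finset.univ : Finset (Fin n)), lamW β W * (1 - lamW β W)

/-!
Two `r`-subsets, paired off element by element, have coordinate sums within `r · (δ / r) = δ`
of each other. The logistic function `σ` satisfies `σ s ≤ e^d σ t` whenever `|s - t| ≤ d`, and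
since `1 - σ s = σ (-s)` the product `σ (1 - σ)` satisfies the same bound with `e^(2d)`. So each
`λ_W` (resp. `λ_W (1 - λ_W)`) lies within a factor `e^δ` (resp. `e^(2δ)`) of every other one,
hence of their average.
-/

open Real Finset Set

namespace Real

lemma exp_div_one_add_exp_eq_sigmoid (s : ℝ) : exp s / (1 + exp s) = sigmoid s := by
  rw [sigmoid_def, exp_neg]
  field_simp
  ring

lemma sigmoid_le_exp_mul_sigmoid_s5 {s t d : ℝ} (h : |s - t| ≤ d) :
    sigmoid s ≤ exp d * sigmoid t := by
  have hd : 0 ≤ d := (abs_nonneg _).trans h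
  have key : 1 + exp (-t) ≤ exp d * (1 + exp (-s)) := by
    rw [mul_add, mul_one, ← exp_add]
    gcongr
    · exact one_le_exp hd
    · linarith [(abs_le.1 h).2]
  calc sigmoid s = exp d * (exp d * (1 + exp (-s)))⁻¹ := by
        rw [sigmoid_def, mul_inv, ← mul_assoc, mul_inv_cancel₀ (exp_pos d).ne', one_mul]
    _ ≤ exp d * sigmoid t := by
        rw [sigmoid_def]
        gcongr

lemma sigmoid_mul_one_sub_le_exp_mul {s t d : ℝ} (h : |s - t| ≤ d) :
    sigmoid s * (1 - sigmoid s) ≤ exp (2 * d) * (sigmoid t * (1 - sigmoid t)) := by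
  have hneg : |-s - -t| ≤ d := by rwa [neg_sub_neg, abs_sub_comm]
  rw [← sigmoid_neg, ← sigmoid_neg, two_mul, exp_add, mul_mul_mul_comm]
  exact mul_le_mul (sigmoid_le_exp_mul_sigmoid_s5 h) (sigmoid_le_exp_mul_sigmoid_s5 hneg)
    (sigmoid_nonneg _) (mul_nonneg (exp_pos d).le (sigmoid_nonneg t))

lemma sigmoid_mul_one_sub_pos (s : ℝ) : 0 < sigmoid s * (1 - sigmoid s) :=
  mul_pos (sigmoid_pos s) (sub_pos.2 (sigmoid_lt_one s))

end Real

lemma Finset.abs_sum_sub_sum_le_card_mul {ι : Type*} {β : ι → ℝ} {c : ℝ}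
    (hβ : ∀ j k, |β j - β k| ≤ c) {W W' : Finset ι} (h : #W = #W') :
    |∑ j ∈ W, β j - ∑ j ∈ W', β j| ≤ #W * c := by
  let e : W ≃ W' := equivOfCardEq h
  have hW' : ∑ j ∈ W', β j = ∑ j ∈ W.attach, β (e j) := by
    rw [← sum_attach W' β]
    exact (e.sum_comp (fun k => β k)).symm
  rw [hW', ← sum_attach W β, ← sum_sub_distrib]
  calc |∑ j ∈ W.attach, (β j - β (e j))|
      ≤ ∑ j ∈ W.attach, |β j - β (e j)| := abs_sum_le_sum_abs _ _
    _ ≤ #W.attach • c := sum_le_card_nsmul _ _ _ fun j _ => hβ _ _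
    _ = #W * c := by rw [card_attach, nsmul_eq_mul]

lemma div_mem_Icc_exp_of_le {a m d : ℝ} (ha : 0 < a) (hm : m ≤ exp d * a)
    (hm' : a ≤ exp d * m) :
    a / m ∈ Icc (exp (-d)) (exp d) := by
  have m_pos : 0 < m := pos_of_mul_pos_right (ha.trans_le hm') (exp_pos d).le
  rw [Set.mem_Icc, le_div_iff₀ m_pos, div_le_iff₀ m_pos, exp_neg, inv_mul_le_iff₀ (exp_pos d)]
  exact ⟨hm, hm'⟩

lemma div_mean_mem_Icc_exp {α : Type*} {s : Finset α} (hs : s.Nonempty) {f : α → ℝ}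
    {a d : ℝ} (ha : 0 < a) (hf : ∀ x ∈ s, f x ≤ exp d * a ∧ a ≤ exp d * f x) :
    a / ((#s : ℝ)⁻¹ * ∑ x ∈ s, f x) ∈ Icc (exp (-d)) (exp d) := by
  have hcard : (0 : ℝ) < #s := by exact_mod_cast hs.card_pos
  apply div_mem_Icc_exp_of_le ha
  · rw [inv_mul_le_iff₀ hcard, ← nsmul_eq_mul]
    exact sum_le_card_nsmul _ _ _ fun x hx => (hf x hx).1
  · rw [← mul_assoc, mul_comm (exp d), mul_assoc, le_inv_mul_iff₀ hcard, mul_sum,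
      ← nsmul_eq_mul]
    exact card_nsmul_le_sum _ _ _ fun x hx => (hf x hx).2

theorem stmt5_general (n r : ℕ) (hr : 1 ≤ r) (hrn : r ≤ n) (δ : ℝ)
    (β : Fin n → ℝ) (hβ : ∀ j k, |β j - β k| ≤ δ / r)
    (W : Finset (Fin n)) (hW : W.card = r) :
    (Real.exp (-δ) ≤ lamW β W / lamAvg n r β ∧ lamW β W / lamAvg n r β ≤ Real.exp δ) ∧
    (Real.exp (-(2 * δ)) ≤ lamW β W * (1 - lamW β W) / LamAvg n r β ∧
      lamW β W * (1 - lamW β W) / LamAvg n r β ≤ Real.exp (2 * δ)) := by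
  set P := powersetCard r (univ : Finset (Fin n))
  have hP : P.Nonempty := powersetCard_nonempty.2 (by simpa using hrn)
  have hcard : #P = n.choose r := by simp [P]
  have hsum : ∀ W' ∈ P, |∑ j ∈ W', β j - ∑ j ∈ W, β j| ≤ δ := by
    intro W' hW'
    have hW'r : #W' = r := (mem_powersetCard.1 hW').2
    have := abs_sum_sub_sum_le_card_mul hβ (hW'r.trans hW.symm)
    rwa [hW'r, mul_div_cancel₀ _ (by positivity : (r : ℝ) ≠ 0)] at this
  simp only [lamAvg, LamAvg, lamW, exp_div_one_add_exp_eq_sigmoid, ← hcard]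
  constructor
  · refine div_mean_mem_Icc_exp hP (sigmoid_pos _) fun W' hW' => ?_
    exact ⟨sigmoid_le_exp_mul_sigmoid_s5 (hsum W' hW'),
      sigmoid_le_exp_mul_sigmoid_s5 ((abs_sub_comm _ _).trans_le (hsum W' hW'))⟩
  · refine div_mean_mem_Icc_exp hP (sigmoid_mul_one_sub_pos _) fun W' hW' => ?_
    exact ⟨sigmoid_mul_one_sub_le_exp_mul (hsum W' hW'),
      sigmoid_mul_one_sub_le_exp_mul ((abs_sub_comm _ _).trans_le (hsum W' hW'))⟩

theorem stmt5 (n r : ℕ) (hr : 1 ≤ r) (hrn : r ≤ n) (δ : ℝ) (hδ : 0 ≤ δ)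
    (β : Fin n → ℝ) (hβ : ∀ j k, |β j - β k| ≤ δ / r)
    (W : Finset (Fin n)) (hW : W.card = r) :
    (Real.exp (-δ) ≤ lamW β W / lamAvg n r β ∧ lamW β W / lamAvg n r β ≤ Real.exp δ) ∧
    (Real.exp (-(2 * δ)) ≤ lamW β W * (1 - lamW β W) / LamAvg n r β ∧
      lamW β W * (1 - lamW β W) / LamAvg n r β ≤ Real.exp (2 * δ)) :=
  stmt5_general n r hr hrn δ β hβ W hW
end

section
/- Let β ∈ ℝ^n with max_{j,k} |β_j − β_k| ≤ δ/r for some δ ≥ 0, and suppose λ(β) ≤ 7/8. Then (e^{−δ}/256) λ(β) ≤ Λ(β) ≤ λ(β), where λ(β) and Λ(β) are the averages over all r-subsets W of λ_W(β) and of λ_W(β)(1−λ_W(β)) respectively. -/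
open Finset

theorem card_mul_sum_sub_card_mul_sum_le {ι : Type*} (s t : Finset ι) (f : ι → ℝ) {c : ℝ}
    (hf : ∀ j ∈ s, ∀ k ∈ t, f j - f k ≤ c) :
    #t * ∑ j ∈ s, f j - #s * ∑ k ∈ t, f k ≤ #s * #t * c := by
  calc #t * ∑ j ∈ s, f j - #s * ∑ k ∈ t, f k = ∑ j ∈ s, ∑ k ∈ t, (f j - f k) := by
        simp only [sum_sub_distrib, sum_const, nsmul_eq_mul, mul_sum]
    _ ≤ ∑ j ∈ s, ∑ k ∈ t, c := sum_le_sum fun j hj => sum_le_sum fun k hk => hf j hj k hk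
    _ = #s * #t * c := by simp only [sum_const, nsmul_eq_mul, mul_assoc]

theorem sum_sub_sum_le_of_card_eq {ι : Type*} {s t : Finset ι} {r : ℕ}
    (hs : #s = r) (ht : #t = r) (f : ι → ℝ) {c : ℝ}
    (hf : ∀ j ∈ s, ∀ k ∈ t, f j - f k ≤ c) :
    ∑ j ∈ s, f j - ∑ k ∈ t, f k ≤ r * c := by
  rcases Nat.eq_zero_or_pos r with rfl | hr
  · simp [card_eq_zero.mp hs, card_eq_zero.mp ht]
  have h := card_mul_sum_sub_card_mul_sum_le s t f hf
  rw [hs, ht] at h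
  have hr' : (0 : ℝ) < r := by exact_mod_cast hr
  nlinarith

section lamW

variable {n : ℕ} (β : Fin n → ℝ) (W : Finset (Fin n))

theorem lamW_nonneg : 0 ≤ lamW β W := by
  unfold lamW; positivity

theorem one_sub_lamW : 1 - lamW β W = (1 + Real.exp (∑ j ∈ W, β j))⁻¹ := by
  unfold lamW; field_simp; ring

theorem lamW_le_one : lamW β W ≤ 1 := by
  have hinv : 0 ≤ (1 + Real.exp (∑ j ∈ W, β j))⁻¹ := by positivity
  linarith [one_sub_lamW β W]

theorem exp_sum_le_seven_of_lamW_le {β : Fin n → ℝ} {W : Finset (Fin n)}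
    (h : lamW β W ≤ 7 / 8) : Real.exp (∑ j ∈ W, β j) ≤ 7 := by
  rw [lamW, div_le_iff₀ (by positivity)] at h
  linarith

theorem exp_neg_div_eight_le_one_sub_lamW {β : Fin n → ℝ} {W : Finset (Fin n)} {s δ : ℝ}
    (hs : Real.exp s ≤ 7) (hδ : 0 ≤ δ) (hW : ∑ j ∈ W, β j ≤ s + δ) :
    Real.exp (-δ) / 8 ≤ 1 - lamW β W := by
  have hexp : 1 + Real.exp (∑ j ∈ W, β j) ≤ 8 * Real.exp δ := by
    have hexpW : Real.exp (∑ j ∈ W, β j) ≤ Real.exp s * Real.exp δ := by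
      rw [← Real.exp_add]; exact Real.exp_le_exp.mpr hW
    nlinarith [Real.one_le_exp hδ, Real.exp_pos δ]
  rw [one_sub_lamW, Real.exp_neg, div_eq_mul_inv, ← mul_inv]
  exact inv_anti₀ (by positivity) (by linarith)

end lamW

section averages

variable (n r : ℕ) (β : Fin n → ℝ)

theorem lamAvg_nonneg : 0 ≤ lamAvg n r β :=
  mul_nonneg (by positivity) (sum_nonneg fun W _ => lamW_nonneg β W)

theorem LamAvg_le_lamAvg : LamAvg n r β ≤ lamAvg n r β := by
  refine mul_le_mul_of_nonneg_left (sum_le_sum fun W _ => ?_) (by positivity)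
  nlinarith [lamW_nonneg β W, lamW_le_one β W]

variable {n r β}

theorem mul_lamAvg_le_LamAvg {c : ℝ}
    (hc : ∀ W ∈ powersetCard r (univ : Finset (Fin n)), c ≤ 1 - lamW β W) :
    c * lamAvg n r β ≤ LamAvg n r β := by
  rw [lamAvg, LamAvg, mul_left_comm, mul_sum]
  refine mul_le_mul_of_nonneg_left (sum_le_sum fun W hW => ?_) (by positivity)
  rw [mul_comm (lamW β W)]
  exact mul_le_mul_of_nonneg_right (hc W hW) (lamW_nonneg β W)

theorem exists_lamW_le_of_lamAvg_le (hne : (powersetCard r (univ : Finset (Fin n))).Nonempty)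
    {a : ℝ} (h : lamAvg n r β ≤ a) :
    ∃ W ∈ powersetCard r (univ : Finset (Fin n)), lamW β W ≤ a := by
  have hcard : (0 : ℝ) < n.choose r := by
    have := hne.card_pos
    rw [card_powersetCard, card_univ, Fintype.card_fin] at this
    exact_mod_cast this
  refine exists_le_of_sum_le hne ?_
  rw [lamAvg, inv_mul_le_iff₀ hcard] at h
  simpa [card_powersetCard, mul_comm] using h

end averages

theorem stmt7_general (n r : ℕ) (δ : ℝ) (hδ : 0 ≤ δ)
    (β : Fin n → ℝ) (hβ : ∀ j k, |β j - β k| ≤ δ / r)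
    (hl : lamAvg n r β ≤ 7 / 8) :
    Real.exp (-δ) / 256 * lamAvg n r β ≤ LamAvg n r β ∧ LamAvg n r β ≤ lamAvg n r β := by
  have hrδ : r * (δ / r) ≤ δ := by
    rcases Nat.eq_zero_or_pos r with rfl | hr
    · simpa using hδ
    · rw [mul_div_cancel₀ _ (by positivity)]
  have hgap : ∀ W ∈ powersetCard r (univ : Finset (Fin n)), Real.exp (-δ) / 8 ≤ 1 - lamW β W := by
    intro W hW
    obtain ⟨W₀, hW₀, hW₀l⟩ := exists_lamW_le_of_lamAvg_le ⟨W, hW⟩ hl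
    refine exp_neg_div_eight_le_one_sub_lamW (exp_sum_le_seven_of_lamW_le hW₀l) hδ ?_
    have := sum_sub_sum_le_of_card_eq (mem_powersetCard.mp hW).2 (mem_powersetCard.mp hW₀).2 β
      fun j _ k _ => (abs_le.mp (hβ j k)).2
    linarith
  refine ⟨le_trans ?_ (mul_lamAvg_le_LamAvg hgap), LamAvg_le_lamAvg n r β⟩
  exact mul_le_mul_of_nonneg_right (by linarith [Real.exp_pos (-δ)]) (lamAvg_nonneg n r β)

theorem stmt7 (n r : ℕ) (hr : 1 ≤ r) (hrn : r ≤ n) (δ : ℝ) (hδ : 0 ≤ δ)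
    (β : Fin n → ℝ) (hβ : ∀ j k, |β j - β k| ≤ δ / r)
    (hl : lamAvg n r β ≤ 7 / 8) :
    Real.exp (-δ) / 256 * lamAvg n r β ≤ LamAvg n r β ∧ LamAvg n r β ≤ lamAvg n r β :=
  stmt7_general n r δ hδ β hβ hl
end

section
/- Quadratic form identity: for any β ∈ ℝ^n and any x ∈ ℝ^n, x^T A(β) x = (1/2) ∑_{W ∈ S_r(n)} λ_W(β)(1−λ_W(β)) (∑_{j∈W} x_j)^2. In particular A(β) is positive semidefinite. -/
noncomputable def matA (n r : ℕ) (β : Fin n → ℝ) : Matrix (Fin n) (Fin n) ℝ :=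
  Matrix.of fun j k =>
    if j = k then
      (1 / 2) * ∑ W ∈ (Finset.powersetCard r (Finset.univ : Finset (Fin n))).filter
        (fun W => j ∈ W), lamW β W * (1 - lamW β W)
    else
      (1 / 2) * ∑ W ∈ (Finset.powersetCard r (Finset.univ : Finset (Fin n))).filter
        (fun W => j ∈ W ∧ k ∈ W), lamW β W * (1 - lamW β W)


open Matrix Finset

section WeightedGramSum

variable {ι m R : Type*} [Fintype m]

theorem dotProduct_sum_smul_vecMulVec_self_mulVec [CommSemiring R] (s : Finset ι) (c : ι → R)
    (v : ι → m → R) (x : m → R) :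
    x ⬝ᵥ (∑ i ∈ s, c i • vecMulVec (v i) (v i)) *ᵥ x = ∑ i ∈ s, c i * (v i ⬝ᵥ x) ^ 2 := by
  simp only [sum_mulVec, dotProduct_sum, smul_mulVec, vecMulVec_mulVec, dotProduct_smul]
  refine sum_congr rfl fun i _ => ?_
  simp [dotProduct_comm x, sq]

theorem posSemidef_sum_smul_vecMulVec_self [CommRing R] [PartialOrder R] [StarRing R]
    [StarOrderedRing R] [TrivialStar R] (s : Finset ι) {c : ι → R} (hc : ∀ i ∈ s, 0 ≤ c i)
    (v : ι → m → R) : (∑ i ∈ s, c i • vecMulVec (v i) (v i)).PosSemidef :=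
  posSemidef_sum s fun i hi => by
    simpa using (posSemidef_vecMulVec_self_star (v i)).smul (hc i hi)

theorem indicator_dotProduct [Semiring R] [DecidableEq m] (W : Finset m) (x : m → R) :
    (fun j => if j ∈ W then 1 else 0) ⬝ᵥ x = ∑ j ∈ W, x j := by
  simp [dotProduct, ite_mul, sum_ite_mem]

end WeightedGramSum

theorem lamW_mul_one_sub_nonneg {n : ℕ} (β : Fin n → ℝ) (W : Finset (Fin n)) :
    0 ≤ lamW β W * (1 - lamW β W) := by
  unfold lamW
  have hpos : 0 < 1 + Real.exp (∑ j ∈ W, β j) := by positivity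
  exact mul_nonneg (by positivity) (sub_nonneg.2 ((div_le_one hpos).2 (by linarith)))

theorem matA_eq_sum_smul_vecMulVec (n r : ℕ) (β : Fin n → ℝ) :
    matA n r β = ∑ W ∈ powersetCard r univ, (lamW β W * (1 - lamW β W) / 2) •
      vecMulVec (fun j => if j ∈ W then 1 else 0) (fun j => if j ∈ W then 1 else 0) := by
  ext j k
  simp only [matA, of_apply, Matrix.sum_apply, Matrix.smul_apply, vecMulVec_apply, smul_eq_mul,
    sum_filter, mul_sum, ite_zero_mul_ite_zero]
  split_ifs with hjk
  · subst hjk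
    simp only [and_self]
    exact sum_congr rfl fun W _ => by split_ifs <;> ring
  · exact sum_congr rfl fun W _ => by split_ifs <;> ring

open Matrix in
theorem stmt12_general (n r : ℕ) (β : Fin n → ℝ) :
    (∀ x : Fin n → ℝ,
      x ⬝ᵥ (matA n r β).mulVec x =
        (1 / 2) * ∑ W ∈ Finset.powersetCard r (Finset.univ : Finset (Fin n)),
          lamW β W * (1 - lamW β W) * (∑ j ∈ W, x j) ^ 2) ∧
    (matA n r β).PosSemidef := by
  rw [matA_eq_sum_smul_vecMulVec]
  refine ⟨fun x => ?_, posSemidef_sum_smul_vecMulVec_self _ (fun W _ => ?_) _⟩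
  · simp only [dotProduct_sum_smul_vecMulVec_self_mulVec, indicator_dotProduct, mul_sum]
    exact sum_congr rfl fun W _ => by ring
  · have := lamW_mul_one_sub_nonneg β W
    positivity

open Matrix in
theorem stmt12 (n r : ℕ) (hr : 2 ≤ r) (hrn : r ≤ n) (β : Fin n → ℝ) :
    (∀ x : Fin n → ℝ,
      x ⬝ᵥ (matA n r β).mulVec x =
        (1 / 2) * ∑ W ∈ Finset.powersetCard r (Finset.univ : Finset (Fin n)),
          lamW β W * (1 - lamW β W) * (∑ j ∈ W, x j) ^ 2) ∧
    (matA n r β).PosSemidef :=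
  stmt12_general n r β
end

section
/- For any t ∈ ℝ and λ ∈ [0,1], |1 + λ(e^{it} − 1)| ≤ exp( −(1/2)(1 − t²/12) λ(1−λ) t² ). -/
/-!
Since `‖1 + λ(e^{it} - 1)‖² = 1 - 2λ(1-λ)(1 - cos t)`, the Taylor bound
`1 - cos t ≥ t²/2 - t⁴/24` makes the square at most `1 + 2c`, where `c` is the exponent on the
right, and `1 + 2c ≤ exp (2c) = (exp c)²`.
-/

open Real

theorem Real.cos_le_one_sub_sq_div_two_add_pow_four (x : ℝ) :
    cos x ≤ 1 - x ^ 2 / 2 + x ^ 4 / 24 := by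
  wlog hx : 0 ≤ x
  · simpa [Even.neg_pow (by decide : Even 4)] using this (-x) (by linarith)
  let f (t : ℝ) : ℝ := 1 - t ^ 2 / 2 + t ^ 4 / 24 - cos t
  have hderiv (t : ℝ) : deriv f t = sin t - (t - t ^ 3 / 6) := by
    simp (disch := fun_prop) [f]
    ring
  have hmono : MonotoneOn f (Set.Ici 0) := by
    apply monotoneOn_of_deriv_nonneg (convex_Ici 0) (by fun_prop) (by fun_prop)
    intro t ht
    rw [interior_Ici] at ht
    rw [hderiv, sub_nonneg]
    exact sin_ge_sub_cube ht.le
  have h0 : f 0 ≤ f x := hmono Set.self_mem_Ici hx hx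
  simpa [f] using h0

theorem Complex.norm_one_add_mul_exp_mul_I_sub_one_sq (t l : ℝ) :
    ‖1 + (l : ℂ) * (exp (t * I) - 1)‖ ^ 2 = 1 - 2 * (l * (1 - l)) * (1 - Real.cos t) := by
  rw [Complex.sq_norm, normSq_apply]
  simp only [add_re, add_im, mul_re, mul_im, sub_re, sub_im, exp_ofReal_mul_I_re,
    exp_ofReal_mul_I_im, ofReal_re, ofReal_im, one_re, one_im]
  linear_combination l ^ 2 * Real.sin_sq_add_cos_sq t

theorem stmt19 (t l : ℝ) (h0 : 0 ≤ l) (h1 : l ≤ 1) :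
    ‖1 + (l : ℂ) * (Complex.exp (t * Complex.I) - 1)‖ ≤
      Real.exp (-(1 / 2) * (1 - t ^ 2 / 12) * (l * (1 - l)) * t ^ 2) := by
  set c := -(1 / 2) * (1 - t ^ 2 / 12) * (l * (1 - l)) * t ^ 2 with hc
  have hl : 0 ≤ l * (1 - l) := mul_nonneg h0 (sub_nonneg.2 h1)
  have hcos := cos_le_one_sub_sq_div_two_add_pow_four t
  refine le_of_pow_le_pow_left₀ two_ne_zero (exp_pos c).le ?_
  calc ‖1 + (l : ℂ) * (Complex.exp (t * Complex.I) - 1)‖ ^ 2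
      = 1 - 2 * (l * (1 - l)) * (1 - cos t) := Complex.norm_one_add_mul_exp_mul_I_sub_one_sq t l
    _ ≤ 2 * c + 1 := by linear_combination 2 * mul_le_mul_of_nonneg_left hcos hl + 2 * hc
    _ ≤ exp (2 * c) := add_one_le_exp _
    _ = exp c ^ 2 := by rw [← exp_nat_mul]; norm_num
end
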